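/- (Cone splitting principle) Let u : ℝ^m → ℝ^ℓ be a function that is invariant under translations by a k-dimensional linear subspace V ⊆ ℝ^m, is 0-homogeneous with respect to the origin (u(λx) = u(x) for all λ > 0, x ∈ ℝ^m), and is also 0-homogeneous with respect to a point z ∉ V (u(z + λv) = u(z + v) for all λ > 0, v ∈ ℝ^m). Then u is invariant under translations by the (k+1)-dimensional subspace span(V ∪ {z}). -/

import Mathlib

/-! Homogeneity at `0` and at `z` together make every `s • z` with `s < 1` a period of `u`: the
dilation of ratio `1 - s` about `z` composed with the dilation of ratio `(1 - s)⁻¹` about `0` is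
the translation by `s • z`. Periods form a group, so all multiples of `z` are periods, and so is
`V + ℝ z`. -/

open Function

theorem Function.periodic_of_mem_sup {R E F : Type*} [Semiring R] [AddCommMonoid E]
    [Module R E] {u : E → F} {p q : Submodule R E} (hp : ∀ v ∈ p, Periodic u v)
    (hq : ∀ v ∈ q, Periodic u v) :
    ∀ v ∈ p ⊔ q, Periodic u v := by
  intro v hv
  obtain ⟨a, ha, b, hb, rfl⟩ := Submodule.mem_sup.mp hv
  exact (hp a ha).add_period (hq b hb)

section Homogeneous

variable {𝕜 E F : Type*} [Field 𝕜] [LinearOrder 𝕜] [IsStrictOrderedRing 𝕜]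
  [AddCommGroup E] [Module 𝕜 E]

variable (𝕜) in
def IsZeroHomogeneousAt (u : E → F) (p : E) : Prop :=
  ∀ lam : 𝕜, 0 < lam → ∀ w : E, u (p + lam • w) = u (p + w)

namespace IsZeroHomogeneousAt

variable {u : E → F} {z : E}

theorem periodic_smul_of_lt_one (h0 : IsZeroHomogeneousAt 𝕜 u 0)
    (hz : IsZeroHomogeneousAt 𝕜 u z) {s : 𝕜} (hs : s < 1) : Periodic u (s • z) := by
  intro x
  have hpos : 0 < 1 - s := sub_pos.mpr hs
  have hdil : x + s • z = z + (1 - s) • ((1 - s)⁻¹ • x - z) := by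
    rw [smul_sub, smul_smul, mul_inv_cancel₀ hpos.ne']
    module
  calc u (x + s • z) = u (z + ((1 - s)⁻¹ • x - z)) := by rw [hdil, hz _ hpos]
    _ = u (0 + (1 - s)⁻¹ • x) := by rw [add_sub_cancel, zero_add]
    _ = u x := by rw [h0 _ (inv_pos.mpr hpos), zero_add]

theorem periodic_smul (h0 : IsZeroHomogeneousAt 𝕜 u 0) (hz : IsZeroHomogeneousAt 𝕜 u z)
    (s : 𝕜) : Periodic u (s • z) := by
  rcases lt_or_ge s 1 with hs | hs
  · exact periodic_smul_of_lt_one h0 hz hs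
  · simpa using (periodic_smul_of_lt_one h0 hz (s := -s) (by linarith)).neg

end IsZeroHomogeneousAt

end Homogeneous

/-- **Cone splitting principle.** Let `u : ℝᵐ → ℝˡ` be invariant under
translations by a `k`-dimensional linear subspace `V ⊆ ℝᵐ`, `0`-homogeneous with respect to
the origin, and `0`-homogeneous with respect to a point `z ∉ V`.  Then `u` is invariant under
translations by the `(k+1)`-dimensional subspace `span (V ∪ {z})`. -/
theorem cone_splitting_principle (m l k : ℕ) (u : (Fin m → ℝ) → (Fin l → ℝ))
    (V : Submodule ℝ (Fin m → ℝ)) (hV : Module.finrank ℝ V = k)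
    (htrans : ∀ x : Fin m → ℝ, ∀ v ∈ V, u (x + v) = u x)
    (hhom : ∀ lam : ℝ, 0 < lam → ∀ x : Fin m → ℝ, u (lam • x) = u x)
    (z : Fin m → ℝ) (hz : z ∉ V)
    (hhomz : ∀ lam : ℝ, 0 < lam → ∀ v : Fin m → ℝ, u (z + lam • v) = u (z + v)) :
    Module.finrank ℝ ↥(V ⊔ Submodule.span ℝ {z}) = k + 1 ∧
      ∀ x : Fin m → ℝ, ∀ v ∈ V ⊔ Submodule.span ℝ {z}, u (x + v) = u x := by
  refine ⟨by rw [Submodule.finrank_sup_span_singleton hz, hV], fun x v hv => ?_⟩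
  have h0 : IsZeroHomogeneousAt ℝ u 0 := fun lam hlam w => by simpa using hhom lam hlam w
  have hspan : ∀ w ∈ Submodule.span ℝ {z}, Periodic u w := by
    intro w hw
    obtain ⟨s, rfl⟩ := Submodule.mem_span_singleton.mp hw
    exact h0.periodic_smul hhomz s
  exact periodic_of_mem_sup (fun w hw y => htrans y w hw) hspan v hv x
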